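/- arXiv:2601.13756 — 2 statements merged into one kernel-verified Lean document; each statement's English description precedes it below -/
import Mathlib

section
/- For every n ∈ ℕ with n ≥ 1, let λ̃ ∈ ℝ^{n+1} be the vector λ̃ = ((n+1)/n)·(1/2, 1, 1, …, 1, 1/2), i.e., λ̃_0 = λ̃_n = (n+1)/(2n) and λ̃_i = (n+1)/n for 0 < i < n. Then σ(B(λ̃)) = 2 (n/(n+1))^{1/2}. -/
/-
The vector `w = (1, √2, …, √2, 1)` is a positive eigenvector of `B(λ̃)` for the eigenvalue
`2 √(n/(n+1))`. For an entrywise nonnegative matrix, the eigenvalue of a positive eigenvector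
bounds every real eigenvalue in absolute value: if `A v = μ v`, take the least `r` with
`|v| ≤ r w`; at an index where equality holds, `|μ| r w_i ≤ (A (r w))_i = ρ r w_i`.
-/

open Real

/-- The `(n+2) × (n+2)` symmetric tridiagonal matrix `B(λ)` with zero diagonal and
entries `λ_{j}^{-1/2}` on the sub/super-diagonals (0-based indexing: the entry in
positions `(i, i+1)` and `(i+1, i)` is `(l i)^{-1/2}` for `i = 0, …, n`). -/
noncomputable def Bmat (n : ℕ) (l : Fin (n+1) → ℝ) :
    Matrix (Fin (n+2)) (Fin (n+2)) ℝ :=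
  Matrix.of fun i j =>
    if h1 : (i : ℕ) + 1 = (j : ℕ) then
      l ⟨(i : ℕ), by have := j.isLt; omega⟩ ^ (-(1/2) : ℝ)
    else if h2 : (j : ℕ) + 1 = (i : ℕ) then
      l ⟨(j : ℕ), by have := i.isLt; omega⟩ ^ (-(1/2) : ℝ)
    else 0

/-- The largest eigenvalue (Perron root) of `B(λ)`. -/
noncomputable def sigmaB (n : ℕ) (l : Fin (n+1) → ℝ) : ℝ :=
  sSup {μ : ℝ | ∃ v : Fin (n+2) → ℝ, v ≠ 0 ∧ (Bmat n l).mulVec v = μ • v}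

/-- The feasible set `Λ_n`: all entries positive and `(1/(n+1)) ∑ λ_i ≤ 1`. -/
def Feasible (n : ℕ) (l : Fin (n+1) → ℝ) : Prop :=
  (∀ i, 0 < l i) ∧ (∑ i, l i) / ((n : ℝ) + 1) ≤ 1

/-- `λ̄` is a minimizer of `σ(B(·))` over `Λ_n`. -/
def IsMinimizer (n : ℕ) (l : Fin (n+1) → ℝ) : Prop :=
  Feasible n l ∧ ∀ m : Fin (n+1) → ℝ, Feasible n m → sigmaB n l ≤ sigmaB n m

/-- A Perron vector of `B(λ)`: positive entries, Euclidean norm one,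
eigenvector for the Perron root. -/
def IsPerronVector (n : ℕ) (l : Fin (n+1) → ℝ) (v : Fin (n+2) → ℝ) : Prop :=
  (∀ i, 0 < v i) ∧ (∑ i, v i ^ 2) = 1 ∧ (Bmat n l).mulVec v = sigmaB n l • v

namespace Matrix

variable {ι : Type*} [Fintype ι] {A : Matrix ι ι ℝ} {w : ι → ℝ} {ρ : ℝ}

theorem abs_le_of_mulVec_eq_smul_of_pos (hA : ∀ i j, 0 ≤ A i j) (hw : ∀ i, 0 < w i)
    (hρ : A *ᵥ w = ρ • w) {v : ι → ℝ} (hv : v ≠ 0) {μ : ℝ} (hμ : A *ᵥ v = μ • v) :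
    |μ| ≤ ρ := by
  obtain ⟨k, hk⟩ := Function.ne_iff.1 hv
  have : Nonempty ι := ⟨k⟩
  obtain ⟨i, hi⟩ := Finite.exists_max fun j => |v j| / w j
  set r := |v i| / w i
  have hle : ∀ j, |v j| ≤ r * w j := fun j => (div_le_iff₀ (hw j)).1 (hi j)
  have hvi : |v i| = r * w i := (div_mul_cancel₀ _ (hw i).ne').symm
  have hr : 0 < r := (div_pos (abs_pos.2 hk) (hw k)).trans_le (hi k)
  have key : |μ| * |v i| ≤ ρ * |v i| :=
    calc |μ| * |v i| = |∑ j, A i j * v j| := by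
          rw [← abs_mul, ← smul_eq_mul, ← Pi.smul_apply, ← hμ]; rfl
      _ ≤ ∑ j, A i j * (r * w j) := by
          refine (Finset.abs_sum_le_sum_abs _ _).trans (Finset.sum_le_sum fun j _ => ?_)
          rw [abs_mul, abs_of_nonneg (hA i j)]
          exact mul_le_mul_of_nonneg_left (hle j) (hA i j)
      _ = r * (A *ᵥ w) i := by simp only [mulVec, dotProduct, Finset.mul_sum, mul_left_comm]
      _ = ρ * |v i| := by rw [hρ, Pi.smul_apply, smul_eq_mul, hvi]; ring
  exact le_of_mul_le_mul_right key (hvi ▸ mul_pos hr (hw i))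

theorem isGreatest_eigenvalues_of_pos_eigenvector [Nonempty ι] (hA : ∀ i j, 0 ≤ A i j)
    (hw : ∀ i, 0 < w i) (hρ : A *ᵥ w = ρ • w) :
    IsGreatest {μ : ℝ | ∃ v : ι → ℝ, v ≠ 0 ∧ A *ᵥ v = μ • v} ρ :=
  ⟨⟨w, fun h => (hw (Classical.arbitrary ι)).ne' (congrFun h _), hρ⟩,
    fun _ ⟨_, hv, hμ⟩ => (le_abs_self _).trans (abs_le_of_mulVec_eq_smul_of_pos hA hw hρ hv hμ)⟩

end Matrix

open Matrix

section

variable {n : ℕ}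

theorem Bmat_nonneg {l : Fin (n+1) → ℝ} (hl : ∀ k, 0 ≤ l k) (i j : Fin (n+2)) :
    0 ≤ Bmat n l i j := by
  simp only [Bmat, of_apply]
  split_ifs <;> simp [Real.rpow_nonneg, hl]

theorem Bmat_comp_val_apply (g : ℕ → ℝ) (i j : Fin (n+2)) :
    Bmat n (fun k => g k) i j =
      if (i : ℕ) + 1 = j ∨ (j : ℕ) + 1 = i then g (min i j) ^ (-(1/2) : ℝ) else 0 := by
  simp only [Bmat, of_apply]
  split_ifs <;> first | rfl | omega | rw [min_eq_left (by omega)] | rw [min_eq_right (by omega)]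

noncomputable def lambdaTilde (n k : ℕ) : ℝ :=
  if k = 0 ∨ k = n then ((n : ℝ) + 1) / (2 * n) else ((n : ℝ) + 1) / n

theorem lambdaTilde_nonneg (n k : ℕ) : 0 ≤ lambdaTilde n k := by
  unfold lambdaTilde; split_ifs <;> positivity

theorem lambdaTilde_rpow_neg_half (hn : 0 < n) (k : ℕ) :
    lambdaTilde n k ^ (-(1/2) : ℝ) = (if k = 0 ∨ k = n then √2 else 1) * √(n / (n + 1)) := by
  have : (0 : ℝ) < n := by exact_mod_cast hn
  rw [Real.rpow_neg (lambdaTilde_nonneg n k), ← Real.sqrt_eq_rpow, ← Real.sqrt_inv]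
  unfold lambdaTilde
  split_ifs
  · rw [← Real.sqrt_mul zero_le_two]; congr 1; field_simp
  · rw [one_mul, inv_div]

noncomputable def perronVector (n : ℕ) (i : Fin (n+2)) : ℝ :=
  if (i : ℕ) = 0 ∨ (i : ℕ) = n + 1 then 1 else √2

theorem perronVector_pos (i : Fin (n+2)) : 0 < perronVector n i := by
  unfold perronVector; split_ifs <;> positivity

theorem Bmat_mulVec_perronVector (hn : 0 < n) :
    Bmat n (fun k => lambdaTilde n k) *ᵥ perronVector n =
      (2 * √(n / (n + 1))) • perronVector n := by
  ext ⟨i, hi⟩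
  simp only [mulVec, dotProduct, Bmat_comp_val_apply, lambdaTilde_rpow_neg_half hn,
    Pi.smul_apply, smul_eq_mul]
  have h2 : √2 * √2 = 2 := Real.mul_self_sqrt zero_le_two
  generalize √((n : ℝ) / (n + 1)) = c
  obtain rfl | rfl | ⟨hi0, hin⟩ : i = 0 ∨ i = n + 1 ∨ (0 < i ∧ i ≤ n) := by omega
  · rw [Fintype.sum_eq_single ⟨1, by omega⟩ fun j hj => by
      rw [if_neg (by have := Fin.val_ne_of_ne hj; simp at this ⊢; omega), zero_mul]]
    simp [perronVector, hn.ne']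
    linear_combination c * h2
  · rw [Fintype.sum_eq_single ⟨n, by omega⟩ fun j hj => by
      rw [if_neg (by have := Fin.val_ne_of_ne hj; simp at this ⊢; omega), zero_mul]]
    simp [perronVector, hn.ne']
    linear_combination c * h2
  · rw [Fintype.sum_eq_add ⟨i - 1, by omega⟩ ⟨i + 1, by omega⟩ (by simp [Fin.ext_iff])
      fun j hj => by
        rw [if_neg (by simp [Fin.ext_iff] at hj ⊢; omega), zero_mul]]
    simp [perronVector]
    split_ifs <;> first | omega | ring

end

/-- the Perron root of `B(λ̃)` for `λ̃ = ((n+1)/n)·(1/2,1,…,1,1/2)`. -/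
theorem stmt_1 (n : ℕ) (hn : 1 ≤ n) :
    sigmaB n (fun i => if (i : ℕ) = 0 ∨ (i : ℕ) = n
        then ((n : ℝ) + 1) / (2 * n) else ((n : ℝ) + 1) / n)
      = 2 * Real.sqrt ((n : ℝ) / ((n : ℝ) + 1)) :=
  (isGreatest_eigenvalues_of_pos_eigenvector (Bmat_nonneg (fun k => lambdaTilde_nonneg n k))
    perronVector_pos (Bmat_mulVec_perronVector hn)).csSup_eq
end

section
/- Let n ∈ ℕ with n ≥ 1, let λ̄ be a minimizer of σ(B(·)) over Λ_n with σ̄ = σ(B(λ̄)), let v̄ be a Perron vector of B(λ̄), and set ā_i := (v̄_i/v̄_1)^{2/3} for i = 1,…,n+2. If n = 4k or n = 4k+1 for some k ∈ ℕ, then ā_1 < ā_3 < ā_5 < … < ā_{2k+1} and ā_2 < ā_4 < ā_6 < … < ā_{2k+2}. If n = 4k+2 or n = 4k+3 for some k ∈ ℕ, then ā_1 < ā_3 < ā_5 < … < ā_{2k+3} and ā_2 < ā_4 < ā_6 < … < ā_{2k+2}. -/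
open Real

/-!
At a minimizer, the weights `λ_q^{-3/2} v_q v_{q+1}` (minus the partial derivatives of the
Perron root) are all equal: otherwise moving mass from one `λ_j` to another `λ_i` keeps
`λ` feasible and lowers `σ`, as a Collatz–Wielandt bound for the perturbed eigenvector
`v + t z` shows, `z` being the first-order correction. Substituting these weights into the
eigen-equation, `u_i := v_i^{2/3}`, extended by `u_0 := 0`, satisfies
`u_{i-1} + u_{i+1} = K u_i^2` for a constant `K`. Reflect this recurrence about the index `i + 1`: if
`u_{i+2} ≤ u_i`, the right half stays below the left half all the way down to `u_0 = 0`, which is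
impossible.
-/

open Matrix Filter Topology

section PerronRoot

variable {ι : Type*} [Fintype ι]

theorem le_of_mulVec_eq_smul_of_mulVec_le {M : Matrix ι ι ℝ} (hM : ∀ i j, 0 ≤ M i j)
    {w : ι → ℝ} (hw : ∀ i, 0 < w i) {ρ : ℝ} (hMw : ∀ i, (M *ᵥ w) i ≤ ρ * w i)
    {μ : ℝ} {x : ι → ℝ} (hx : x ≠ 0) (hMx : M *ᵥ x = μ • x) : μ ≤ ρ := by
  obtain ⟨s, hs⟩ := Function.ne_iff.1 hx
  obtain ⟨r, -, hr⟩ :=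
    Finset.exists_max_image Finset.univ (fun i => |x i| / w i) ⟨s, Finset.mem_univ s⟩
  set c := |x r| / w r
  have hxc : ∀ i, |x i| ≤ c * w i := fun i =>
    (div_le_iff₀ (hw i)).1 (hr i (Finset.mem_univ i))
  have hc : 0 < c := (div_pos (abs_pos.2 hs) (hw s)).trans_le (hr s (Finset.mem_univ s))
  have hxr : |x r| = c * w r := (div_mul_cancel₀ _ (hw r).ne').symm
  have key : |μ| * (c * w r) ≤ ρ * (c * w r) :=
    calc |μ| * (c * w r) = |(M *ᵥ x) r| := by
          rw [hMx, Pi.smul_apply, smul_eq_mul, abs_mul, hxr]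
      _ ≤ ∑ i, M r i * |x i| := by
          simpa only [mulVec, dotProduct, abs_mul, abs_of_nonneg (hM r _)] using
            Finset.abs_sum_le_sum_abs (fun i => M r i * x i) Finset.univ
      _ ≤ ∑ i, M r i * (c * w i) := by gcongr with i; exacts [hM r i, hxc i]
      _ = c * (M *ᵥ w) r := by
          simp only [mulVec, dotProduct, Finset.mul_sum]
          exact Finset.sum_congr rfl fun i _ => by ring
      _ ≤ ρ * (c * w r) := by nlinarith [hMw r]
  exact (le_abs_self μ).trans (le_of_mul_le_mul_right key (mul_pos hc (hw r)))

theorem sSup_eigenvalues_le_of_mulVec_le {M : Matrix ι ι ℝ} (hM : ∀ i j, 0 ≤ M i j)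
    {w : ι → ℝ} (hw : ∀ i, 0 < w i) {ρ : ℝ} (hρ : 0 ≤ ρ)
    (hMw : ∀ i, (M *ᵥ w) i ≤ ρ * w i) :
    sSup {μ : ℝ | ∃ x : ι → ℝ, x ≠ 0 ∧ M *ᵥ x = μ • x} ≤ ρ :=
  Real.sSup_le (fun _ ⟨_, hx, hMx⟩ => le_of_mulVec_eq_smul_of_mulVec_le hM hw hMw hx hMx) hρ

theorem Matrix.IsHermitian.exists_mulVec_eq [DecidableEq ι] {A : Matrix ι ι ℝ}
    (hA : A.IsHermitian) {v : ι → ℝ} (hker : ∀ x, A *ᵥ x = 0 → ∃ c : ℝ, x = c • v)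
    {y : ι → ℝ} (hy : y ⬝ᵥ v = 0) : ∃ z, A *ᵥ z = y := by
  have hT := isSymmetric_toEuclideanLin_iff.mpr hA
  have hy' : WithLp.toLp 2 y ∈ LinearMap.range A.toEuclideanLin := by
    rw [← Submodule.orthogonal_orthogonal (LinearMap.range _), hT.orthogonal_range]
    intro u hu
    obtain ⟨c, hc⟩ := hker u.ofLp (congrArg WithLp.ofLp hu)
    rw [EuclideanSpace.inner_eq_star_dotProduct, hc]
    simp [hy]
  obtain ⟨z, hz⟩ := hy'
  exact ⟨z.ofLp, congrArg WithLp.ofLp hz⟩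

theorem hasDerivAt_mulVec_apply {M : ℝ → Matrix ι ι ℝ} {M' : Matrix ι ι ℝ}
    {w : ℝ → ι → ℝ} {w' : ι → ℝ} {t₀ : ℝ}
    (hM : ∀ i j, HasDerivAt (fun t => M t i j) (M' i j) t₀)
    (hw : ∀ i, HasDerivAt (fun t => w t i) (w' i) t₀) (r : ι) :
    HasDerivAt (fun t => (M t *ᵥ w t) r) ((M' *ᵥ w t₀) r + (M t₀ *ᵥ w') r) t₀ := by
  simp only [mulVec, dotProduct, ← Finset.sum_add_distrib]
  exact HasDerivAt.fun_sum fun i _ => (hM r i).mul (hw i)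

theorem eventually_neg_of_hasDerivAt {F : ℝ → ℝ} {D t₀ : ℝ} (hF : HasDerivAt F D t₀)
    (hF₀ : F t₀ = 0) (hD : D < 0) : ∀ᶠ t in 𝓝[>] t₀, F t < 0 := by
  have h := eventually_nhdsWithin_sign_eq_of_deriv_neg (hF.deriv ▸ hD) hF₀
  filter_upwards [nhdsWithin_le_nhds h, self_mem_nhdsWithin] with t ht (htpos : t₀ < t)
  rwa [sign_neg (sub_neg.2 htpos), sign_eq_neg_one_iff] at ht

/-- `hz` says that `v + t z` is an eigenvector of `M t` for `σ + δ t` to first order; the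
Collatz–Wielandt bound for `v + t z` with `ρ = σ + δ t / 2` then holds for small `t > 0`. -/
theorem eventually_sSup_eigenvalues_lt_of_hasDerivAt {M : ℝ → Matrix ι ι ℝ}
    {M' : Matrix ι ι ℝ} (hM : ∀ i j, HasDerivAt (fun t => M t i j) (M' i j) 0)
    (hM_nonneg : ∀ᶠ t in 𝓝[>] 0, ∀ i j, 0 ≤ M t i j) {σ δ : ℝ} (hσ : 0 < σ) (hδ : δ < 0)
    {v z : ι → ℝ} (hv : ∀ i, 0 < v i) (hMv : M 0 *ᵥ v = σ • v)
    (hz : M' *ᵥ v + M 0 *ᵥ z = δ • v + σ • z) :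
    ∀ᶠ t in 𝓝[>] 0, sSup {μ : ℝ | ∃ x : ι → ℝ, x ≠ 0 ∧ M t *ᵥ x = μ • x} < σ := by
  have hrow : ∀ r, HasDerivAt
      (fun t => (M t *ᵥ (v + t • z)) r - (σ + δ / 2 * t) * (v r + t * z r))
      (δ / 2 * v r) 0 := by
    intro r
    have hw : ∀ i, HasDerivAt (fun t : ℝ => (v + t • z) i) (z i) 0 := fun i => by
      simpa using ((hasDerivAt_id (0 : ℝ)).mul_const (z i)).const_add (v i)
    have hlin : HasDerivAt (fun t : ℝ => σ + δ / 2 * t) (δ / 2) 0 := by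
      simpa using ((hasDerivAt_id (0 : ℝ)).const_mul (δ / 2)).const_add σ
    refine ((hasDerivAt_mulVec_apply hM hw r).sub (hlin.mul (hw r))).congr_deriv ?_
    have := congrFun hz r
    simp only [Pi.add_apply, Pi.smul_apply, smul_eq_mul] at this
    simp only [zero_smul, add_zero, mul_zero]
    linarith
  have hrow_neg : ∀ᶠ t in 𝓝[>] 0, ∀ r,
      (M t *ᵥ (v + t • z)) r < (σ + δ / 2 * t) * (v r + t * z r) := by
    refine eventually_all.2 fun r => ?_
    filter_upwards [eventually_neg_of_hasDerivAt (hrow r) (by simp [hMv]) (by nlinarith [hv r])]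
      with t ht
    linarith
  have hpos : ∀ᶠ t in 𝓝 (0 : ℝ), 0 < σ + δ / 2 * t ∧ ∀ i, 0 < v i + t * z i := by
    refine (ContinuousAt.eventually_lt (by fun_prop) (by fun_prop) (by simpa using hσ)).and
      (eventually_all.2 fun i => ContinuousAt.eventually_lt (by fun_prop) (by fun_prop) ?_)
    simpa using hv i
  filter_upwards [hrow_neg, nhdsWithin_le_nhds hpos, hM_nonneg, self_mem_nhdsWithin]
    with t hrow hpos hMt (ht : 0 < t)
  calc _ ≤ σ + δ / 2 * t := sSup_eigenvalues_le_of_mulVec_le hMt (w := v + t • z)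
          (fun i => by simpa using hpos.2 i) hpos.1.le fun r => by simpa using (hrow r).le
    _ < σ := by nlinarith

theorem eventually_sSup_eigenvalues_lt [DecidableEq ι] {M : ℝ → Matrix ι ι ℝ}
    {M' : Matrix ι ι ℝ} (hM : ∀ i j, HasDerivAt (fun t => M t i j) (M' i j) 0)
    (hM_nonneg : ∀ᶠ t in 𝓝[>] 0, ∀ i j, 0 ≤ M t i j) (hM₀ : (M 0).IsHermitian)
    {σ : ℝ} (hσ : 0 < σ) {v : ι → ℝ} (hv : ∀ i, 0 < v i) (hMv : M 0 *ᵥ v = σ • v)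
    (hsimple : ∀ x, M 0 *ᵥ x = σ • x → ∃ c : ℝ, x = c • v)
    (hneg : v ⬝ᵥ (M' *ᵥ v) < 0) :
    ∀ᶠ t in 𝓝[>] 0, sSup {μ : ℝ | ∃ x : ι → ℝ, x ≠ 0 ∧ M t *ᵥ x = μ • x} < σ := by
  have hvv : 0 < v ⬝ᵥ v := by
    refine lt_of_le_of_ne (Finset.sum_nonneg fun i _ => mul_self_nonneg (v i)) fun h => ?_
    rw [eq_comm, dotProduct_self_eq_zero] at h
    simp [h] at hneg
  set δ := v ⬝ᵥ (M' *ᵥ v) / (v ⬝ᵥ v)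
  -- the first-order correction `z` exists because the right-hand side is orthogonal to the
  -- simple eigenvector `v`
  obtain ⟨z, hz⟩ : ∃ z, (M 0 - σ • 1) *ᵥ z = δ • v - M' *ᵥ v := by
    refine (hM₀.sub (isHermitian_one.smul (.all σ))).exists_mulVec_eq
      (fun x hx => hsimple x ?_) ?_
    · rwa [sub_mulVec, smul_mulVec, one_mulVec, sub_eq_zero] at hx
    · rw [sub_dotProduct, smul_dotProduct, dotProduct_comm (M' *ᵥ v), smul_eq_mul,
        div_mul_cancel₀ _ hvv.ne', sub_self]
  refine eventually_sSup_eigenvalues_lt_of_hasDerivAt hM hM_nonneg hσ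
    (div_neg_of_neg_of_pos hneg hvv) hv hMv (z := z) ?_
  rw [sub_mulVec, smul_mulVec, one_mulVec] at hz
  linear_combination hz

end PerronRoot

theorem le_of_recurrence {K : ℝ} (hK : 0 ≤ K) {a b : ℕ → ℝ} {L : ℕ}
    (ha : ∀ k ≤ L, 0 ≤ a k) (hb : ∀ k < L, 0 < b k) (hbL : 0 ≤ b L)
    (hra : ∀ k, k + 2 ≤ L → a (k + 2) + a k = K * a (k + 1) ^ 2)
    (hrb : ∀ k, k + 2 ≤ L → b (k + 2) + b k = K * b (k + 1) ^ 2)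
    (h₀ : a 0 = b 0) (h₁ : a 1 ≤ b 1) : a L ≤ b L := by
  have hb' : ∀ k ≤ L, 0 ≤ b k := fun k hk =>
    hk.lt_or_eq.elim (fun h => (hb k h).le) (· ▸ hbL)
  have next : ∀ k < L, a k ≤ b k → b k * a (k + 1) ≤ b (k + 1) * a k →
      a (k + 1) ≤ b (k + 1) :=
    fun k hk h1 h2 => le_of_mul_le_mul_left (by nlinarith [hb' (k + 1) hk]) (hb k hk)
  -- the ratio `a (k+1) / a k` stays below `b (k+1) / b k`
  have key : ∀ k < L, a k ≤ b k ∧ b k * a (k + 1) ≤ b (k + 1) * a k := by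
    intro k
    induction k with
    | zero => exact fun _ => ⟨h₀.le, by rw [h₀, mul_comm]; nlinarith [hb 0 (by omega)]⟩
    | succ k ih =>
      intro hk
      obtain ⟨h1, h2⟩ := ih (by omega)
      have h3 := next k (by omega) h1 h2
      refine ⟨h3, ?_⟩
      have e : b (k + 1) * a (k + 2) - b (k + 2) * a (k + 1) =
          K * a (k + 1) * b (k + 1) * (a (k + 1) - b (k + 1)) +
            (b k * a (k + 1) - b (k + 1) * a k) := by
        linear_combination b (k + 1) * hra k (by omega) - a (k + 1) * hrb k (by omega)
      have := mul_nonpos_of_nonneg_of_nonpos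
        (mul_nonneg (mul_nonneg hK (ha (k + 1) (by omega))) (hb' (k + 1) (by omega)))
        (sub_nonpos.2 h3)
      linarith
  rcases L with _ | L
  · exact h₀.le
  · exact next L (by omega) (key L (by omega)).1 (key L (by omega)).2

theorem lt_of_recurrence {K : ℝ} {U : ℕ → ℝ} {N : ℕ} (hU₀ : U 0 = 0)
    (hU : ∀ s, 0 < s → s ≤ N → 0 < U s)
    (hrec : ∀ s < N, U (s + 2) + U s = K * U (s + 1) ^ 2)
    {j : ℕ} (hj : 2 * j + 4 ≤ N) : U (j + 1) < U (j + 3) := by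
  have hK : 0 ≤ K := by
    have h := hrec 0 (by omega)
    rw [hU₀, add_zero] at h
    exact (pos_of_mul_pos_left (h ▸ hU 2 (by omega) (by omega)) (sq_nonneg _)).le
  by_contra! h
  -- reflected about `j + 2`, the right half stays below the left one, which ends in `U 0 = 0`
  have := le_of_recurrence hK (a := fun k => U (j + 2 + k)) (b := fun k => U (j + 2 - k))
    (L := j + 2) (fun k hk => (hU _ (by omega) (by omega)).le)
    (fun k hk => hU _ (by omega) (by omega)) (by simp [hU₀])
    (fun k hk => by simpa [add_assoc] using hrec (j + 2 + k) (by omega))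
    (fun k hk => by
      have := hrec (j - k) (by omega)
      rw [show j - k + 2 = j + 2 - k by omega, show j - k + 1 = j + 2 - (k + 1) by omega,
        show j - k = j + 2 - (k + 2) by omega] at this
      linarith)
    rfl (by simpa using h)
  simp only [Nat.sub_self, hU₀] at this
  exact this.not_gt (hU _ (by omega) (by omega))

/-- `pad x` is `x` shifted one place to the right and extended by zeros: `pad x (i + 1) = x i`.
It turns every row of a tridiagonal system, boundary rows included, into one three-term
formula. -/
def pad {m : ℕ} (x : Fin m → ℝ) : ℕ → ℝ
  | 0 => 0
  | s + 1 => if h : s < m then x ⟨s, h⟩ else 0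

section Pad
variable {m : ℕ} (x : Fin m → ℝ)

@[simp] theorem pad_zero : pad x 0 = 0 := rfl

@[simp] theorem pad_val_add_one (i : Fin m) : pad x (i + 1) = x i := by simp [pad]

theorem pad_add_one_of_lt {s : ℕ} (hs : s < m) : pad x (s + 1) = x ⟨s, hs⟩ := by
  simp [pad, hs]

theorem pad_add_one_of_le {s : ℕ} (hs : m ≤ s) : pad x (s + 1) = 0 := by simp [pad, hs]

end Pad

def tridiag {n : ℕ} (b : Fin (n + 1) → ℝ) : Matrix (Fin (n + 2)) (Fin (n + 2)) ℝ :=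
  Matrix.of fun i j =>
    if h1 : (i : ℕ) + 1 = (j : ℕ) then b ⟨i, by omega⟩
    else if h2 : (j : ℕ) + 1 = (i : ℕ) then b ⟨j, by omega⟩
    else 0

theorem Bmat_eq_tridiag (n : ℕ) (l : Fin (n + 1) → ℝ) :
    Bmat n l = tridiag fun q => l q ^ (-(1 / 2) : ℝ) := rfl

section Tridiag
variable {n : ℕ}

theorem tridiag_nonneg {b : Fin (n + 1) → ℝ} (hb : ∀ q, 0 ≤ b q) (i j : Fin (n + 2)) :
    0 ≤ tridiag b i j := by
  simp only [tridiag, of_apply]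
  split_ifs <;> simp [hb]

theorem isHermitian_tridiag (b : Fin (n + 1) → ℝ) : (tridiag b).IsHermitian := by
  refine IsHermitian.ext fun i j => ?_
  simp only [tridiag, of_apply, star_trivial]
  split_ifs <;> first | rfl | omega

theorem tridiag_mulVec (b : Fin (n + 1) → ℝ) (x : Fin (n + 2) → ℝ) (i : Fin (n + 2)) :
    (tridiag b *ᵥ x) i = pad b i * pad x i + pad b (i + 1) * pad x (i + 2) := by
  have hterm : ∀ j : Fin (n + 2), tridiag b i j * x j =
      (if (j : ℕ) = i + 1 then pad b (i + 1) * pad x (i + 2) else 0) +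
      (if (j : ℕ) = i - 1 then pad b i * pad x i else 0) := by
    intro j
    obtain ⟨i, hi⟩ := i
    obtain ⟨j, hj⟩ := j
    simp only [tridiag, of_apply]
    by_cases h1 : i + 1 = j
    · subst h1
      rw [dif_pos rfl, if_pos rfl, if_neg (by omega), pad_add_one_of_lt b (by omega),
        pad_add_one_of_lt x hj, add_zero]
    by_cases h2 : j + 1 = i
    · subst h2
      rw [dif_neg h1, dif_pos rfl, if_neg (by omega), if_pos (by omega),
        pad_add_one_of_lt b (by omega), pad_add_one_of_lt x hj, zero_add]
    rw [dif_neg h1, dif_neg h2, if_neg (by omega), zero_mul, zero_add]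
    split_ifs with h3
    · obtain rfl : i = 0 := by omega
      simp
    · rfl
  have hsum : ∀ (k : ℕ) (C : ℝ), ∑ j : Fin (n + 2), (if (j : ℕ) = k then C else 0) =
      if k < n + 2 then C else 0 := fun k C => by
    rw [Fin.sum_univ_eq_sum_range (fun s => if s = k then C else 0), Finset.sum_ite_eq']
    simp
  rw [mulVec, dotProduct, Finset.sum_congr rfl fun j _ => hterm j, Finset.sum_add_distrib,
    hsum, hsum, if_pos (show (i : ℕ) - 1 < n + 2 by omega), add_comm]
  split_ifs with h
  · rfl
  · rw [pad_add_one_of_le _ (by omega), zero_mul, add_zero]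

theorem dotProduct_tridiag_mulVec (b : Fin (n + 1) → ℝ) (x : Fin (n + 2) → ℝ) :
    x ⬝ᵥ (tridiag b *ᵥ x) = 2 * ∑ q, b q * (x q.castSucc * x q.succ) := by
  have hx : ∀ i : Fin (n + 2), x i = pad x (i + 1) := fun i => (pad_val_add_one x i).symm
  have hb : ∀ q : Fin (n + 1), b q = pad b (q + 1) := fun q => (pad_val_add_one b q).symm
  set T := ∑ s ∈ Finset.range (n + 1), pad b (s + 1) * (pad x (s + 1) * pad x (s + 2))
  have hT : ∑ q : Fin (n + 1), b q * (x q.castSucc * x q.succ) = T := by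
    simp only [hb, hx, Fin.val_castSucc, Fin.val_succ]
    exact Fin.sum_univ_eq_sum_range (fun s => pad b (s + 1) * (pad x (s + 1) * pad x (s + 2))) _
  have hlow : ∑ s ∈ Finset.range (n + 2), pad x (s + 1) * (pad b s * pad x s) = T := by
    rw [Finset.sum_range_succ']
    simp only [pad_zero, mul_zero, add_zero, T]
    exact Finset.sum_congr rfl fun s _ => by ring
  have hup :
      ∑ s ∈ Finset.range (n + 2), pad x (s + 1) * (pad b (s + 1) * pad x (s + 2)) = T := by
    rw [Finset.sum_range_succ, pad_add_one_of_le b le_rfl]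
    simp only [zero_mul, mul_zero, add_zero, T]
    exact Finset.sum_congr rfl fun s _ => by ring
  rw [hT]
  simp only [dotProduct, tridiag_mulVec, hx, mul_add]
  rw [Fin.sum_univ_eq_sum_range (fun s => pad x (s + 1) * (pad b s * pad x s) +
    pad x (s + 1) * (pad b (s + 1) * pad x (s + 2))), Finset.sum_add_distrib, hlow, hup]
  ring

theorem eq_zero_of_tridiag_mulVec_eq_smul {b : Fin (n + 1) → ℝ} (hb : ∀ q, b q ≠ 0)
    {σ : ℝ} {x : Fin (n + 2) → ℝ} (hx : tridiag b *ᵥ x = σ • x) (hx₀ : x 0 = 0) :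
    x = 0 := by
  have key : ∀ s < n + 2, pad x s = 0 ∧ pad x (s + 1) = 0 := by
    intro s
    induction s with
    | zero => exact fun _ => ⟨rfl, by simpa [pad] using hx₀⟩
    | succ s ih =>
      intro hs
      obtain ⟨h0, h1⟩ := ih (by omega)
      have hrow := congrFun hx ⟨s, by omega⟩
      rw [tridiag_mulVec, Pi.smul_apply, smul_eq_mul, ← pad_val_add_one x] at hrow
      simp only [h0, h1, mul_zero, zero_add, pad_add_one_of_lt b (show s < n + 1 by omega)]
        at hrow
      exact ⟨h1, (mul_eq_zero.1 hrow).resolve_left (hb _)⟩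
  funext i
  simpa using (key i i.isLt).2

theorem eq_smul_of_tridiag_mulVec_eq_smul {b : Fin (n + 1) → ℝ} (hb : ∀ q, b q ≠ 0)
    {σ : ℝ} {v x : Fin (n + 2) → ℝ} (hv : tridiag b *ᵥ v = σ • v) (hv₀ : v 0 ≠ 0)
    (hx : tridiag b *ᵥ x = σ • x) : x = (x 0 / v 0) • v := by
  refine sub_eq_zero.1 (eq_zero_of_tridiag_mulVec_eq_smul hb (σ := σ) ?_ ?_)
  · rw [mulVec_sub, mulVec_smul, hx, hv, smul_sub, smul_comm]
  · simp [div_mul_cancel₀ _ hv₀]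

theorem hasDerivAt_tridiag_apply {b : ℝ → Fin (n + 1) → ℝ} {b' : Fin (n + 1) → ℝ}
    {t₀ : ℝ} (hb : ∀ q, HasDerivAt (fun t => b t q) (b' q) t₀) (i j : Fin (n + 2)) :
    HasDerivAt (fun t => tridiag (b t) i j) (tridiag b' i j) t₀ := by
  simp only [tridiag, of_apply]
  split_ifs
  exacts [hb _, hb _, hasDerivAt_const _ _]

end Tridiag

theorem mul_eq_rpow_mul_rpow {b x y : ℝ} (hb : 0 < b) (hx : 0 < x) (hy : 0 < y) :
    b * y = (b ^ 3 * (x * y)) ^ (1 / 3 : ℝ) * x ^ (-(1 / 3) : ℝ) * y ^ (2 / 3 : ℝ) := by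
  have hx' : x ^ (1 / 3 : ℝ) * x ^ (-(1 / 3) : ℝ) = 1 := by rw [← rpow_add hx]; norm_num
  have hy' : y ^ (1 / 3 : ℝ) * y ^ (2 / 3 : ℝ) = y := by rw [← rpow_add hy]; norm_num
  rw [mul_rpow (by positivity) (by positivity), mul_rpow hx.le hy.le, ← rpow_natCast,
    ← rpow_mul hb.le]
  norm_num
  linear_combination -(b * (y ^ (1 / 3 : ℝ) * y ^ (2 / 3 : ℝ))) * hx' - b * hy'

theorem tridiag_pad_rpow_recurrence {n : ℕ} {b : Fin (n + 1) → ℝ} {x : Fin (n + 2) → ℝ}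
    {σ c : ℝ} (hb : ∀ q, 0 < b q) (hx : ∀ i, 0 < x i)
    (hc : ∀ q, b q ^ 3 * (x q.castSucc * x q.succ) = c) (heig : tridiag b *ᵥ x = σ • x)
    {k : ℕ} (hk : k < n + 2) :
    pad (fun i => x i ^ (2 / 3 : ℝ)) (k + 2) + pad (fun i => x i ^ (2 / 3 : ℝ)) k =
      σ * c ^ (-(1 / 3) : ℝ) * pad (fun i => x i ^ (2 / 3 : ℝ)) (k + 1) ^ 2 := by
  set u := pad fun i => x i ^ (2 / 3 : ℝ)
  set xk := x ⟨k, hk⟩ with hxk_def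
  have hxk : 0 < xk := hx _
  have hu : ∀ s (hs : s < n + 2), u (s + 1) = x ⟨s, hs⟩ ^ (2 / 3 : ℝ) :=
    fun s hs => pad_add_one_of_lt _ hs
  have hc0 : 0 < c := hc 0 ▸ mul_pos (pow_pos (hb 0) 3) (mul_pos (hx _) (hx _))
  have hleft : pad b k * pad x k = c ^ (1 / 3 : ℝ) * xk ^ (-(1 / 3) : ℝ) * u k := by
    rcases k with _ | s
    · simp [u]
    · have hs : s < n + 1 := by omega
      rw [pad_add_one_of_lt b hs, pad_add_one_of_lt x (by omega), hu s (by omega),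
        ← hc ⟨s, hs⟩, mul_comm (x _)]
      exact mul_eq_rpow_mul_rpow (hb _) (hx _) (hx _)
  have hright :
      pad b (k + 1) * pad x (k + 2) = c ^ (1 / 3 : ℝ) * xk ^ (-(1 / 3) : ℝ) * u (k + 2) := by
    by_cases hk' : k < n + 1
    · rw [pad_add_one_of_lt b hk', pad_add_one_of_lt x (by omega), hu (k + 1) (by omega),
        ← hc ⟨k, hk'⟩]
      exact mul_eq_rpow_mul_rpow (hb _) (hx _) (hx _)
    · simp [u, pad_add_one_of_le _ (show n + 1 ≤ k by omega),
        pad_add_one_of_le _ (show n + 2 ≤ k + 1 by omega)]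
  have hrow := congrFun heig ⟨k, hk⟩
  rw [tridiag_mulVec, hleft, hright, Pi.smul_apply, smul_eq_mul, ← hxk_def] at hrow
  have e1 : c ^ (1 / 3 : ℝ) * c ^ (-(1 / 3) : ℝ) = 1 := by rw [← rpow_add hc0]; norm_num
  have e2 : xk ^ (-(1 / 3) : ℝ) * xk ^ (1 / 3 : ℝ) = 1 := by rw [← rpow_add hxk]; norm_num
  have e3 : xk * xk ^ (1 / 3 : ℝ) = (xk ^ (2 / 3 : ℝ)) ^ 2 := by
    rw [← rpow_natCast, ← rpow_mul hxk.le, ← rpow_one_add' hxk.le (by norm_num)]; norm_num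
  rw [hu k hk]
  linear_combination c ^ (-(1 / 3) : ℝ) * xk ^ (1 / 3 : ℝ) * hrow
    + σ * c ^ (-(1 / 3) : ℝ) * e3 - (u k + u (k + 2)) * e1
    - (u k + u (k + 2)) * (c ^ (1 / 3 : ℝ) * c ^ (-(1 / 3) : ℝ)) * e2

theorem eventually_forall_pos_add_smul {ι : Type*} [Finite ι] {l : ι → ℝ}
    (hl : ∀ q, 0 < l q) (d : ι → ℝ) :
    ∀ᶠ t in 𝓝 (0 : ℝ), ∀ q, 0 < (l + t • d) q :=
  eventually_all.2 fun q =>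
    ContinuousAt.eventually_lt (f := fun _ => 0) (by fun_prop) (by fun_prop) (by simpa using hl q)

section Minimizer
variable {n : ℕ} {l : Fin (n + 1) → ℝ} {v : Fin (n + 2) → ℝ}

theorem IsPerronVector.sigmaB_pos (hl : ∀ q, 0 < l q) (hv : IsPerronVector n l v) :
    0 < sigmaB n l := by
  have h := congrFun hv.2.2 0
  rw [Bmat_eq_tridiag, tridiag_mulVec] at h
  simp only [Fin.val_zero, pad_zero, mul_zero, zero_add, Pi.smul_apply, smul_eq_mul,
    show pad v 2 = v 1 from pad_add_one_of_lt v (by omega),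
    show pad (fun q => l q ^ (-(1 / 2) : ℝ)) 1 = l 0 ^ (-(1 / 2) : ℝ) from
      pad_add_one_of_lt _ (by omega)] at h
  exact pos_of_mul_pos_left (h ▸ mul_pos (rpow_pos_of_pos (hl 0) _) (hv.1 1)) (hv.1 0).le

theorem eventually_sigmaB_add_smul_lt (hl : ∀ q, 0 < l q) (hv : IsPerronVector n l v)
    {d : Fin (n + 1) → ℝ}
    (hd : 0 < ∑ q, d q * (l q ^ (-(3 / 2) : ℝ) * (v q.castSucc * v q.succ))) :
    ∀ᶠ t in 𝓝[>] (0 : ℝ), sigmaB n (l + t • d) < sigmaB n l := by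
  have hv' : tridiag (fun q => l q ^ (-(1 / 2) : ℝ)) *ᵥ v = sigmaB n l • v := hv.2.2
  refine eventually_sSup_eigenvalues_lt
    (M := fun t => tridiag fun q => (l + t • d) q ^ (-(1 / 2) : ℝ))
    (M' := tridiag fun q => -(1 / 2) * d q * l q ^ (-(3 / 2) : ℝ)) ?_ ?_ ?_
    (hv.sigmaB_pos hl) hv.1 (by simpa only [zero_smul, add_zero] using hv') ?_ ?_
  · refine hasDerivAt_tridiag_apply fun q => ?_
    have hlin : HasDerivAt (fun t : ℝ => (l + t • d) q) (d q) 0 := by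
      simpa using ((hasDerivAt_id (0 : ℝ)).mul_const (d q)).const_add (l q)
    refine (hlin.rpow_const (Or.inl (by simpa using (hl q).ne'))).congr_deriv ?_
    rw [zero_smul, add_zero, show (-(1 / 2) : ℝ) - 1 = -(3 / 2) by norm_num]
    ring
  · filter_upwards [(eventually_forall_pos_add_smul hl d).filter_mono nhdsWithin_le_nhds]
      with t ht
    exact tridiag_nonneg fun q => (rpow_pos_of_pos (ht q) _).le
  · exact isHermitian_tridiag _
  · intro x hx
    exact ⟨_, eq_smul_of_tridiag_mulVec_eq_smul (fun q => (rpow_pos_of_pos (hl q) _).ne') hv'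
      (hv.1 0).ne' (by simpa only [zero_smul, add_zero] using hx)⟩
  · rw [dotProduct_tridiag_mulVec]
    have : ∑ q, -(1 / 2) * d q * l q ^ (-(3 / 2) : ℝ) * (v q.castSucc * v q.succ) =
        -(1 / 2) * ∑ q, d q * (l q ^ (-(3 / 2) : ℝ) * (v q.castSucc * v q.succ)) := by
      rw [Finset.mul_sum]
      exact Finset.sum_congr rfl fun q _ => by ring
    linarith

theorem IsMinimizer.perron_weight_eq (hmin : IsMinimizer n l) (hv : IsPerronVector n l v)
    (i j : Fin (n + 1)) :
    l i ^ (-(3 / 2) : ℝ) * (v i.castSucc * v i.succ) =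
      l j ^ (-(3 / 2) : ℝ) * (v j.castSucc * v j.succ) := by
  set G := fun q : Fin (n + 1) => l q ^ (-(3 / 2) : ℝ) * (v q.castSucc * v q.succ)
  show G i = G j
  suffices h : ∀ i j, ¬G j < G i from le_antisymm (not_lt.1 (h i j)) (not_lt.1 (h j i))
  intro i j hG
  -- moving weight from `j` to `i` keeps `λ` feasible and would lower the Perron root
  set d : Fin (n + 1) → ℝ := Pi.single i 1 - Pi.single j 1
  have hd : ∑ q, d q * G q = G i - G j := by
    simp [d, sub_mul, Finset.sum_sub_distrib, Pi.single_apply]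
  have hfeas : ∀ᶠ t in 𝓝[>] (0 : ℝ), Feasible n (l + t • d) := by
    filter_upwards [(eventually_forall_pos_add_smul hmin.1.1 d).filter_mono nhdsWithin_le_nhds]
      with t ht
    refine ⟨ht, ?_⟩
    have hd0 : ∑ q, d q = 0 := by simp [d]
    simpa [Finset.sum_add_distrib, ← Finset.mul_sum, hd0] using hmin.1.2
  obtain ⟨t, hlt, ht⟩ :=
    ((eventually_sigmaB_add_smul_lt hmin.1.1 hv (hd ▸ sub_pos.2 hG)).and hfeas).exists
  exact (hmin.2 _ ht).not_gt hlt

theorem IsMinimizer.perron_lt (hmin : IsMinimizer n l) (hv : IsPerronVector n l v) {j : ℕ}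
    (hj : 2 * j + 3 ≤ n + 1) :
    v ⟨j, by omega⟩ < v ⟨j + 2, by omega⟩ := by
  have hl := hmin.1.1
  have hc : ∀ q, (l q ^ (-(1 / 2) : ℝ)) ^ 3 * (v q.castSucc * v q.succ) =
      l 0 ^ (-(3 / 2) : ℝ) * (v (0 : Fin (n + 1)).castSucc * v (0 : Fin (n + 1)).succ) := by
    intro q
    rw [← rpow_natCast, ← rpow_mul (hl q).le]
    norm_num
    exact hmin.perron_weight_eq hv q 0
  have hlt := lt_of_recurrence (U := pad fun i => v i ^ (2 / 3 : ℝ)) (N := n + 2) rfl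
    (fun s hs hsN => by
      obtain ⟨s, rfl⟩ := Nat.exists_eq_add_of_lt hs
      rw [zero_add, pad_add_one_of_lt _ (by omega)]
      exact rpow_pos_of_pos (hv.1 _) _)
    (fun s hs => tridiag_pad_rpow_recurrence (fun q => rpow_pos_of_pos (hl q) _) hv.1 hc hv.2.2 hs)
    (j := j) (by omega)
  rw [pad_add_one_of_lt _ (by omega), show j + 3 = j + 2 + 1 from rfl,
    pad_add_one_of_lt _ (by omega)] at hlt
  exact (rpow_lt_rpow_iff (hv.1 _).le (hv.1 _).le (by norm_num)).1 hlt

end Minimizer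

theorem stmt_8_general (n : ℕ) (l : Fin (n+1) → ℝ)
    (hmin : IsMinimizer n l) (v : Fin (n+2) → ℝ) (hv : IsPerronVector n l v)
    (a : ℕ → ℝ)
    (ha : ∀ j : Fin (n+2), a ((j : ℕ) + 1) = (v j / v 0) ^ ((2:ℝ)/3)) :
    (∀ k : ℕ, (n = 4*k ∨ n = 4*k+1) →
      (∀ m, m < k → a (2*m+1) < a (2*m+3)) ∧
      (∀ m, m < k → a (2*m+2) < a (2*m+4))) ∧
    (∀ k : ℕ, (n = 4*k+2 ∨ n = 4*k+3) →
      (∀ m, m < k+1 → a (2*m+1) < a (2*m+3)) ∧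
      (∀ m, m < k → a (2*m+2) < a (2*m+4))) := by
  have step : ∀ j, 2 * j + 3 ≤ n + 1 → a (j + 1) < a (j + 3) := fun j hj => by
    rw [ha ⟨j, by omega⟩, ha ⟨j + 2, by omega⟩]
    exact rpow_lt_rpow (div_nonneg (hv.1 _).le (hv.1 0).le)
      (div_lt_div_of_pos_right (hmin.perron_lt hv hj) (hv.1 0)) (by norm_num)
  refine ⟨fun k hk => ⟨fun m _ => ?_, fun m _ => ?_⟩,
    fun k hk => ⟨fun m _ => ?_, fun m _ => ?_⟩⟩
  exacts [step (2 * m) (by omega), step (2 * m + 1) (by omega), step (2 * m) (by omega),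
    step (2 * m + 1) (by omega)]

/-- interlaced monotonicity of the `ā_i = (v̄_i/v̄_1)^{2/3}`
(1-based indexing) at the minimizer. -/
theorem stmt_8 (n : ℕ) (hn : 1 ≤ n) (l : Fin (n+1) → ℝ)
    (hmin : IsMinimizer n l) (v : Fin (n+2) → ℝ) (hv : IsPerronVector n l v)
    (a : ℕ → ℝ)
    (ha : ∀ j : Fin (n+2), a ((j : ℕ) + 1) = (v j / v 0) ^ ((2:ℝ)/3)) :
    (∀ k : ℕ, (n = 4*k ∨ n = 4*k+1) →
      (∀ m, m < k → a (2*m+1) < a (2*m+3)) ∧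
      (∀ m, m < k → a (2*m+2) < a (2*m+4))) ∧
    (∀ k : ℕ, (n = 4*k+2 ∨ n = 4*k+3) →
      (∀ m, m < k+1 → a (2*m+1) < a (2*m+3)) ∧
      (∀ m, m < k → a (2*m+2) < a (2*m+4))) :=
  stmt_8_general n l hmin v hv a ha
end
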